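/- arXiv:1102.4220 — 2 statements merged into one kernel-verified Lean document; each statement's English description precedes it below -/
import Mathlib

section
/- Let G : (c,d) → (-π/2, π/2) be a continuous function and let C ⊂ (c,d) be countable. Suppose at some point y₀ ∈ (c,d) one of the four derived numbers satisfies D⁺G(y₀) > 0, or D₊G(y₀) < 0, or D⁻G(y₀) > 0, or D₋G(y₀) < 0. Then there exists a sequence {yₙ} ⊂ (c,d) \ C with yₙ → y₀ such that the set of intersection points of the line p_{G(y₀)} with the lines p_{G(yₙ)} is bounded in ℝ², where for a ∈ (c,d) the line p_{G(a)} is {(z, a + z·tan(G(a))) : z ∈ ℝ}. -/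
open Filter Set

/-- The line `p_{G(a)}` through `(0, a)` with slope `tan (G a)`. -/
noncomputable def lineThrough (G : ℝ → ℝ) (a : ℝ) : Set (ℝ × ℝ) :=
  {p : ℝ × ℝ | p.2 = a + p.1 * Real.tan (G a)}

lemma freq_of_pos_limsup' {F : Filter ℝ} {f : ℝ → ℝ} (h : 0 < limsup f F) :
    ∃ ε > (0:ℝ), ∃ᶠ x in F, ε < f x := by
  refine ⟨limsup f F / 2, by linarith, ?_⟩
  by_contra hcon
  rw [Filter.not_frequently] at hcon
  have hmem : limsup f F / 2 ∈ {a : ℝ | ∀ᶠ x in F, f x ≤ a} := by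
    filter_upwards [hcon] with x hx
    exact le_of_not_gt hx
  have hle : sInf {a : ℝ | ∀ᶠ x in F, f x ≤ a} ≤ limsup f F / 2 := by
    by_cases hb : BddBelow {a : ℝ | ∀ᶠ x in F, f x ≤ a}
    · exact csInf_le hb hmem
    · rw [Real.sInf_of_not_bddBelow hb]; linarith
  rw [← Filter.limsup_eq] at hle
  linarith

lemma freq_of_neg_liminf' {F : Filter ℝ} {f : ℝ → ℝ} (h : liminf f F < 0) :
    ∃ ε > (0:ℝ), ∃ᶠ x in F, f x < -ε := by
  refine ⟨-(liminf f F) / 2, by linarith, ?_⟩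
  by_contra hcon
  rw [Filter.not_frequently] at hcon
  have hmem : -(-(liminf f F) / 2) ∈ {a : ℝ | ∀ᶠ x in F, a ≤ f x} := by
    filter_upwards [hcon] with x hx
    exact le_of_not_gt hx
  have hle : -(-(liminf f F) / 2) ≤ sSup {a : ℝ | ∀ᶠ x in F, a ≤ f x} := by
    by_cases hb : BddAbove {a : ℝ | ∀ᶠ x in F, a ≤ f x}
    · exact le_csSup hb hmem
    · rw [Real.sSup_of_not_bddAbove hb]; linarith
  rw [← Filter.liminf_eq] at hle
  linarith

lemma tan_expand' {a b : ℝ} (ha : a ∈ Set.Ioo (-(Real.pi/2)) (Real.pi/2))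
    (hb : b ∈ Set.Ioo (-(Real.pi/2)) (Real.pi/2)) :
    |a - b| ≤ |Real.tan a - Real.tan b| := by
  have key : ∀ u v : ℝ, u ∈ Set.Ioo (-(Real.pi/2)) (Real.pi/2) →
      v ∈ Set.Ioo (-(Real.pi/2)) (Real.pi/2) → u ≤ v → v - u ≤ Real.tan v - Real.tan u := by
    have hD : ∀ x ∈ Set.Ioo (-(Real.pi/2)) (Real.pi/2),
        HasDerivAt (fun t => Real.tan t - t) (1 / Real.cos x ^ 2 - 1) x := fun x hx =>
      (Real.hasDerivAt_tan (ne_of_gt (Real.cos_pos_of_mem_Ioo hx))).sub (hasDerivAt_id x)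
    have mono : MonotoneOn (fun t => Real.tan t - t) (Set.Ioo (-(Real.pi/2)) (Real.pi/2)) := by
      apply monotoneOn_of_deriv_nonneg (convex_Ioo _ _)
      · exact fun x hx => ((hD x hx).continuousAt).continuousWithinAt
      · intro x hx
        rw [interior_Ioo] at hx
        exact (hD x hx).differentiableAt.differentiableWithinAt
      · intro x hx
        rw [interior_Ioo] at hx
        rw [(hD x hx).deriv]
        have h2 : 0 < Real.cos x ^ 2 := pow_pos (Real.cos_pos_of_mem_Ioo hx) 2
        have h1 : Real.cos x ^ 2 ≤ 1 := Real.cos_sq_le_one x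
        have h3 : (1:ℝ) ≤ 1 / Real.cos x ^ 2 := by
          rw [le_div_iff₀ h2, one_mul]; exact h1
        linarith
    intro u v hu hv huv
    have := mono hu hv huv
    simp only at this
    linarith
  rcases le_total a b with h | h
  · rw [abs_sub_comm a b, abs_sub_comm (Real.tan a)]
    have hk := key a b ha hb h
    rw [abs_of_nonneg (by linarith), abs_of_nonneg (by linarith)]
    exact hk
  · have hk := key b a hb ha h
    rw [abs_of_nonneg (by linarith), abs_of_nonneg (by linarith)]
    exact hk

/-- Lemma 2.4: if at `y₀` one of the four derived numbers of a continuous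
`G : (c,d) → (-π/2, π/2)` is positive from the right/negative, etc., then there is a
sequence `yₙ → y₀` in `(c,d) \ C` such that the crossing points of the lines
`p_{G(y₀)}` and `p_{G(yₙ)}` form a bounded set in `ℝ²`. -/
theorem stmt_0 (c d : ℝ) (G : ℝ → ℝ) (C : Set ℝ) (hC : C.Countable)
    (hCsub : C ⊆ Set.Ioo c d)
    (hcont : ContinuousOn G (Set.Ioo c d))
    (hrange : ∀ y ∈ Set.Ioo c d, G y ∈ Set.Ioo (-(Real.pi/2)) (Real.pi/2))
    (y₀ : ℝ) (hy₀ : y₀ ∈ Set.Ioo c d)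
    (hder :
      0 < limsup (fun h => (G (y₀ + h) - G y₀) / h) (nhdsWithin 0 (Set.Ioi 0)) ∨
      liminf (fun h => (G (y₀ + h) - G y₀) / h) (nhdsWithin 0 (Set.Ioi 0)) < 0 ∨
      0 < limsup (fun h => (G (y₀ + h) - G y₀) / h) (nhdsWithin 0 (Set.Iio 0)) ∨
      liminf (fun h => (G (y₀ + h) - G y₀) / h) (nhdsWithin 0 (Set.Iio 0)) < 0) :
    ∃ y : ℕ → ℝ, (∀ n, y n ∈ Set.Ioo c d \ C) ∧
      Tendsto y atTop (nhds y₀) ∧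
      Bornology.IsBounded (⋃ n, lineThrough G y₀ ∩ lineThrough G (y n)) := by
  obtain ⟨hcy, hyd⟩ := hy₀
  -- Step 1: a quantitative frequent increment property near `y₀`
  have key : ∃ ε > (0:ℝ), ∃ᶠ h in nhdsWithin (0:ℝ) {(0:ℝ)}ᶜ,
      ε * |h| < |G (y₀ + h) - G y₀| := by
    have hposm : ∀ᶠ h in nhdsWithin (0:ℝ) (Set.Ioi 0), h ∈ Set.Ioi (0:ℝ) :=
      self_mem_nhdsWithin
    have hnegm : ∀ᶠ h in nhdsWithin (0:ℝ) (Set.Iio 0), h ∈ Set.Iio (0:ℝ) :=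
      self_mem_nhdsWithin
    have hle1 : nhdsWithin (0:ℝ) (Set.Ioi 0) ≤ nhdsWithin (0:ℝ) {(0:ℝ)}ᶜ :=
      nhdsWithin_mono _ (fun x hx => ne_of_gt hx)
    have hle2 : nhdsWithin (0:ℝ) (Set.Iio 0) ≤ nhdsWithin (0:ℝ) {(0:ℝ)}ᶜ :=
      nhdsWithin_mono _ (fun x hx => ne_of_lt hx)
    rcases hder with h1 | h2 | h3 | h4
    · obtain ⟨ε, hε, hf⟩ := freq_of_pos_limsup' h1
      refine ⟨ε, hε, Filter.Frequently.filter_mono ?_ hle1⟩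
      refine (hf.and_eventually hposm).mono ?_
      rintro h ⟨hq, hh⟩
      have hh' : (0:ℝ) < h := hh
      rw [lt_div_iff₀ hh'] at hq
      rw [abs_of_pos hh']
      calc ε * h < G (y₀ + h) - G y₀ := hq
        _ ≤ |G (y₀ + h) - G y₀| := le_abs_self _
    · obtain ⟨ε, hε, hf⟩ := freq_of_neg_liminf' h2
      refine ⟨ε, hε, Filter.Frequently.filter_mono ?_ hle1⟩
      refine (hf.and_eventually hposm).mono ?_
      rintro h ⟨hq, hh⟩
      have hh' : (0:ℝ) < h := hh
      rw [div_lt_iff₀ hh'] at hq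
      rw [abs_of_pos hh']
      calc ε * h < -(G (y₀ + h) - G y₀) := by nlinarith
        _ ≤ |G (y₀ + h) - G y₀| := neg_le_abs _
    · obtain ⟨ε, hε, hf⟩ := freq_of_pos_limsup' h3
      refine ⟨ε, hε, Filter.Frequently.filter_mono ?_ hle2⟩
      refine (hf.and_eventually hnegm).mono ?_
      rintro h ⟨hq, hh⟩
      have hh' : h < (0:ℝ) := hh
      rw [lt_div_iff_of_neg hh'] at hq
      rw [abs_of_neg hh']
      calc ε * (-h) < -(G (y₀ + h) - G y₀) := by nlinarith
        _ ≤ |G (y₀ + h) - G y₀| := neg_le_abs _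
    · obtain ⟨ε, hε, hf⟩ := freq_of_neg_liminf' h4
      refine ⟨ε, hε, Filter.Frequently.filter_mono ?_ hle2⟩
      refine (hf.and_eventually hnegm).mono ?_
      rintro h ⟨hq, hh⟩
      have hh' : h < (0:ℝ) := hh
      rw [div_lt_iff_of_neg hh'] at hq
      rw [abs_of_neg hh']
      calc ε * (-h) < G (y₀ + h) - G y₀ := by nlinarith
        _ ≤ |G (y₀ + h) - G y₀| := le_abs_self _
  obtain ⟨ε, hε, hfreq⟩ := key
  have hε4 : (0:ℝ) < ε / 4 := by linarith
  -- Step 2: construct candidate points avoiding C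
  have hstep : ∀ n : ℕ, ∃ z : ℝ, z ∈ Set.Ioo c d ∧ z ∉ C ∧
      |z - y₀| < 1/((n:ℝ)+1) ∧ (ε/4) * |z - y₀| < |G z - G y₀| := by
    intro n
    set δ : ℝ := min (1/((n:ℝ)+1)) (min (d - y₀) (y₀ - c)) with hδdef
    have hn1 : (0:ℝ) < 1/((n:ℝ)+1) := by positivity
    have hδ : 0 < δ := by
      refine lt_min hn1 (lt_min (by linarith) (by linarith))
    have hev : ∀ᶠ h in nhdsWithin (0:ℝ) {(0:ℝ)}ᶜ, |h| < δ := by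
      apply Filter.Eventually.filter_mono nhdsWithin_le_nhds
      filter_upwards [Metric.ball_mem_nhds (0:ℝ) hδ] with x hx
      simpa [Real.dist_eq] using hx
    obtain ⟨h, hq, hsmall⟩ := (hfreq.and_eventually hev).exists
    have hh0 : h ≠ 0 := by
      intro hz; rw [hz] at hq; simp at hq
    have habs : 0 < |h| := abs_pos.mpr hh0
    have hz₀ : y₀ + h ∈ Set.Ioo c d := by
      have h1 := abs_lt.mp (lt_of_lt_of_le hsmall (min_le_right _ _) |>.trans_le (min_le_left _ _))
      have h2 := abs_lt.mp (lt_of_lt_of_le hsmall ((min_le_right _ _).trans (min_le_right _ _)))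
      constructor <;> [linarith [h2.1]; linarith [h1.2]]
    have hGc : ContinuousAt G (y₀ + h) := hcont.continuousAt (isOpen_Ioo.mem_nhds hz₀)
    have hval : (ε/2) * |h| < |G (y₀ + h) - G y₀| := by nlinarith
    have hnhd1 : ∀ᶠ z in nhds (y₀ + h), (ε/2) * |h| < |G z - G y₀| :=
      ContinuousAt.eventually_lt continuousAt_const ((hGc.sub continuousAt_const).abs) hval
    have hnhd2 : ∀ᶠ z in nhds (y₀ + h), z ∈ Set.Ioo c d := by
      filter_upwards [isOpen_Ioo.mem_nhds hz₀] with z hz using hz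
    have hnhd3 : ∀ᶠ z in nhds (y₀ + h), |z - y₀| < min (2*|h|) (1/((n:ℝ)+1)) := by
      have hbase : |y₀ + h - y₀| < min (2*|h|) (1/((n:ℝ)+1)) := by
        have : |y₀ + h - y₀| = |h| := by ring_nf
        rw [this]
        exact lt_min (by linarith) (lt_of_lt_of_le hsmall (min_le_left _ _))
      exact ContinuousAt.eventually_lt ((continuousAt_id.sub continuousAt_const).abs)
        continuousAt_const hbase
    have hdense : Dense Cᶜ := hC.dense_compl ℝ
    have hfr : ∃ᶠ z in nhds (y₀ + h), z ∈ Cᶜ :=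
      mem_closure_iff_frequently.mp (hdense (y₀ + h))
    obtain ⟨z, hzC, ⟨hz1, hz2⟩, hz3⟩ :=
      (hfr.and_eventually ((hnhd1.and hnhd2).and hnhd3)).exists
    refine ⟨z, hz2, hzC, lt_of_lt_of_le hz3 (min_le_right _ _), ?_⟩
    have h2h : |z - y₀| < 2*|h| := lt_of_lt_of_le hz3 (min_le_left _ _)
    nlinarith [abs_nonneg (z - y₀)]
  choose y hy1 hy2 hy3 hy4 using hstep
  refine ⟨y, fun n => ⟨hy1 n, hy2 n⟩, ?_, ?_⟩
  · -- convergence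
    rw [tendsto_iff_dist_tendsto_zero]
    apply squeeze_zero (fun n => dist_nonneg) (fun n => ?_)
      tendsto_one_div_add_atTop_nhds_zero_nat
    rw [Real.dist_eq]
    exact le_of_lt (hy3 n)
  · -- boundedness
    rw [isBounded_iff_forall_norm_le]
    refine ⟨max (4/ε) (|y₀| + (4/ε) * |Real.tan (G y₀)|), ?_⟩
    rintro p hp
    simp only [Set.mem_iUnion] at hp
    obtain ⟨n, hp0, hpn⟩ := hp
    have hp0' : p.2 = y₀ + p.1 * Real.tan (G y₀) := hp0
    have hpn' : p.2 = y n + p.1 * Real.tan (G (y n)) := hpn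
    have hyne : y n ≠ y₀ := by
      intro heq
      have h4 := hy4 n
      rw [heq] at h4
      simp at h4
    have habs : 0 < |y n - y₀| := abs_pos.mpr (sub_ne_zero.mpr hyne)
    have htan : |G (y n) - G y₀| ≤ |Real.tan (G (y n)) - Real.tan (G y₀)| :=
      tan_expand' (hrange _ (hy1 n)) (hrange _ ⟨hcy, hyd⟩)
    have hkey : (ε/4) * |y n - y₀| < |Real.tan (G (y n)) - Real.tan (G y₀)| :=
      lt_of_lt_of_le (hy4 n) htan
    have heq : p.1 * (Real.tan (G (y n)) - Real.tan (G y₀)) = y₀ - y n := by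
      rw [mul_sub]; linarith
    have heqabs : |p.1| * |Real.tan (G (y n)) - Real.tan (G y₀)| = |y n - y₀| := by
      rw [← abs_mul, heq, abs_sub_comm]
    have hbound1 : |p.1| ≤ 4/ε := by
      have hmul : (ε/4) * |y n - y₀| * |p.1| ≤ |y n - y₀| := by
        calc (ε/4) * |y n - y₀| * |p.1|
            ≤ |Real.tan (G (y n)) - Real.tan (G y₀)| * |p.1| :=
              mul_le_mul_of_nonneg_right (le_of_lt hkey) (abs_nonneg _)
          _ = |y n - y₀| := by rw [mul_comm]; exact heqabs
      have hp1 : (ε/4) * |p.1| ≤ 1 := by nlinarith [abs_nonneg p.1]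
      rw [le_div_iff₀ hε]
      nlinarith [abs_nonneg p.1]
    have hbound2 : |p.2| ≤ |y₀| + (4/ε) * |Real.tan (G y₀)| := by
      rw [hp0']
      calc |y₀ + p.1 * Real.tan (G y₀)| ≤ |y₀| + |p.1 * Real.tan (G y₀)| := abs_add_le _ _
        _ = |y₀| + |p.1| * |Real.tan (G y₀)| := by rw [abs_mul]
        _ ≤ |y₀| + (4/ε) * |Real.tan (G y₀)| := by
            have := abs_nonneg (Real.tan (G y₀))
            nlinarith
    rw [Prod.norm_def]
    simp only [Real.norm_eq_abs]
    exact max_le (le_max_of_le_left hbound1) (le_max_of_le_right hbound2)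
end

section
/- Let f, g : ℕ → ℝ be two injective sequences that have the same combinatorial (cyclic betweenness) order on the circle ℝ/ℤ, in the sense that for all k, l, m: f(k) lies on the positively oriented closed arc from f(l) to f(m) if and only if g(k) lies on the positively oriented closed arc from g(l) to g(m). If {f(n)} is dense in ℝ/ℤ, then {g(n)} determines a well-defined map φ on the closure of {g(n)} with φ(g(n)) = f(n), i.e., g(n_k) → g(n) implies f(n_k) → f(n). -/
open Filter Set

private lemma coe_toIcoMod' (a x : ℝ) :
    ((toIcoMod one_pos a x : ℝ) : AddCircle (1:ℝ)) = ↑x := by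
  have : x ≡ toIcoMod one_pos a x [PMOD (1:ℝ)] :=
    AddCommGroup.modEq_iff_zsmul'.2 ⟨-(toIcoDiv one_pos a x), by
      rw [neg_smul, eq_comm, neg_eq_iff_eq_neg, neg_sub]
      exact (self_sub_toIcoMod one_pos a x).symm⟩
  exact AddCommGroup.modEq_iff_eq_mod_zmultiples.1 this.symm

private lemma btw_iff_exists (a c : ℝ) (x : AddCircle (1:ℝ)) :
    btw (↑a : AddCircle (1:ℝ)) x ↑c ↔
      ∃ y ∈ Icc a (toIocMod one_pos a c), (↑y : AddCircle (1:ℝ)) = x := by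
  induction x using QuotientAddGroup.induction_on with
  | H x =>
    rw [QuotientAddGroup.btw_coe_iff]
    constructor
    · intro h
      exact ⟨toIcoMod one_pos a x, ⟨(toIcoMod_mem_Ico one_pos a x).1, h⟩, coe_toIcoMod' a x⟩
    · rintro ⟨y, ⟨hy1, hy2⟩, hxy⟩
      have hyx : toIcoMod one_pos a y = toIcoMod one_pos a x :=
        (toIcoMod_inj one_pos).2 (AddCommGroup.modEq_iff_eq_mod_zmultiples.2 hxy)
      show toIcoMod one_pos a x ≤ toIocMod one_pos a c
      rw [← hyx]
      have hr : toIocMod one_pos a c ≤ a + 1 := (toIocMod_mem_Ioc one_pos a c).2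
      by_cases hya : y < a + 1
      · rw [(toIcoMod_eq_self one_pos).2 ⟨hy1, hya⟩]; exact hy2
      · have hyeq : y = a + 1 := le_antisymm (hy2.trans hr) (not_lt.1 hya)
        rw [hyeq, toIcoMod_apply_right]
        exact le_of_lt (toIocMod_mem_Ioc one_pos a c).1

private lemma isClosed_btw (a c : AddCircle (1:ℝ)) : IsClosed {x | btw a x c} := by
  induction a using QuotientAddGroup.induction_on with
  | H a =>
  induction c using QuotientAddGroup.induction_on with
  | H c =>
    have h : {x : AddCircle (1:ℝ) | btw ↑a x ↑c}
        = ((↑) : ℝ → AddCircle (1:ℝ)) '' Icc a (toIocMod one_pos a c) := by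
      ext x
      simpa [Set.mem_image] using (btw_iff_exists a c x)
    rw [h]
    exact (isCompact_Icc.image (AddCircle.continuous_mk' 1)).isClosed

/-- If two injective sequences `f`, `g` in the circle `ℝ/ℤ` have the same combinatorial
(cyclic betweenness) order, and `f` is dense, then convergence `g (n k) → g n` implies
convergence `f (n k) → f n`; i.e. `φ (g n) = f n` is well defined and continuous on the
closure of the range of `g`. -/
theorem stmt_14 (f g : ℕ → AddCircle (1 : ℝ))
    (hf : Function.Injective f) (hg : Function.Injective g)
    (horder : ∀ k l m : ℕ, btw (f l) (f k) (f m) ↔ btw (g l) (g k) (g m))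
    (hdense : DenseRange f) :
    ∀ (n : ℕ) (nk : ℕ → ℕ),
      Tendsto (fun k => g (nk k)) atTop (nhds (g n)) →
      Tendsto (fun k => f (nk k)) atTop (nhds (f n)) := by
  intro n nk hgn
  rw [tendsto_nhds]
  intro U hU hfnU
  obtain ⟨t, ht⟩ : ∃ t : ℝ, (↑t : AddCircle (1:ℝ)) = f n := Quotient.exists_rep (f n)
  -- find ε
  have hUpre : IsOpen (((↑·) : ℝ → AddCircle (1:ℝ)) ⁻¹' U) :=
    hU.preimage (AddCircle.continuous_mk' 1)
  have htU : t ∈ (((↑·) : ℝ → AddCircle (1:ℝ)) ⁻¹' U) := by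
    simp only [Set.mem_preimage]; rw [ht]; exact hfnU
  obtain ⟨ε0, hε0, hball⟩ := Metric.isOpen_iff.1 hUpre t htU
  set ε := min ε0 (1/2) with hεdef
  have hε : 0 < ε := lt_min hε0 (by norm_num)
  have hε2 : ε ≤ 1/2 := min_le_right _ _
  have hioo : Ioo (t - ε) (t + ε) ⊆ (((↑·) : ℝ → AddCircle (1:ℝ)) ⁻¹' U) := by
    rw [← Real.ball_eq_Ioo]
    exact (Metric.ball_subset_ball (min_le_left _ _)).trans hball
  -- choose l with f l = ↑u, u ∈ (t-ε, t)
  have hopen1 : IsOpen (((↑·) : ℝ → AddCircle (1:ℝ)) '' Ioo (t - ε) t) :=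
    QuotientAddGroup.isOpenMap_coe _ isOpen_Ioo
  have hne1 : (((↑·) : ℝ → AddCircle (1:ℝ)) '' Ioo (t - ε) t).Nonempty :=
    (nonempty_Ioo.2 (by linarith)).image _
  obtain ⟨l, hl⟩ := hdense.exists_mem_open hopen1 hne1
  obtain ⟨u, hu, hul⟩ := hl
  have hopen2 : IsOpen (((↑·) : ℝ → AddCircle (1:ℝ)) '' Ioo t (t + ε)) :=
    QuotientAddGroup.isOpenMap_coe _ isOpen_Ioo
  have hne2 : (((↑·) : ℝ → AddCircle (1:ℝ)) '' Ioo t (t + ε)).Nonempty :=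
    (nonempty_Ioo.2 (by linarith)).image _
  obtain ⟨m, hm⟩ := hdense.exists_mem_open hopen2 hne2
  obtain ⟨v, hv, hvm⟩ := hm
  -- basic inequalities
  have hut : u < t := hu.2
  have htv : t < v := hv.1
  have hvu1 : v - u < 1 := by
    have := hu.1; have := hv.2; linarith [hε2]
  -- toIxxMod computations
  have hIco_ut : toIcoMod one_pos u t = t :=
    (toIcoMod_eq_self one_pos).2 ⟨hut.le, by linarith⟩
  have hIoc_uv : toIocMod one_pos u v = v :=
    (toIocMod_eq_self one_pos).2 ⟨by linarith, by linarith⟩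
  have hIco_vt : toIcoMod one_pos v t = t + 1 := by
    rw [← toIcoMod_add_right]
    exact (toIcoMod_eq_self one_pos).2 ⟨by linarith, by linarith⟩
  have hIoc_vu : toIocMod one_pos v u = u + 1 := by
    rw [← toIocMod_add_right]
    exact (toIocMod_eq_self one_pos).2 ⟨by linarith, by linarith⟩
  -- btw (f l) (f n) (f m), and ¬ btw (f m) (f n) (f l)
  have hbtw_f : btw (f l) (f n) (f m) := by
    rw [← hul, ← hvm, ← ht, QuotientAddGroup.btw_coe_iff,
      show (Fact.out : (0:ℝ) < 1) = one_pos from rfl, hIco_ut, hIoc_uv]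
    exact htv.le
  have hnbtw_f : ¬ btw (f m) (f n) (f l) := by
    rw [← hul, ← hvm, ← ht, QuotientAddGroup.btw_coe_iff,
      show (Fact.out : (0:ℝ) < 1) = one_pos from rfl, hIco_vt, hIoc_vu]
    push_neg
    linarith
  -- transport to g
  have hbtw_g : btw (g l) (g n) (g m) := (horder n l m).1 hbtw_f
  have hnbtw_g : ¬ btw (g m) (g n) (g l) := fun h => hnbtw_f ((horder n m l).2 h)
  -- the open set around g n
  have hVopen : IsOpen {x : AddCircle (1:ℝ) | ¬ btw (g m) x (g l)} :=
    (isClosed_btw (g m) (g l)).isOpen_compl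
  have hgnV : g n ∈ {x : AddCircle (1:ℝ) | ¬ btw (g m) x (g l)} := hnbtw_g
  have hev : ∀ᶠ k in atTop, g (nk k) ∈ {x : AddCircle (1:ℝ) | ¬ btw (g m) x (g l)} :=
    hgn (hVopen.mem_nhds hgnV)
  refine hev.mono fun k hk => ?_
  -- from ¬ btw (g m) _ (g l) get btw (g l) _ (g m) by totality
  have hbk : btw (g l) (g (nk k)) (g m) := (btw_total (g l) (g (nk k)) (g m)).resolve_right hk
  have hfk : btw (f l) (f (nk k)) (f m) := (horder (nk k) l m).2 hbk
  -- membership in U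
  rw [← hul, ← hvm] at hfk
  obtain ⟨y, ⟨hy1, hy2⟩, hyx⟩ := (btw_iff_exists u v (f (nk k))).1 hfk
  rw [hIoc_uv] at hy2
  have : y ∈ Ioo (t - ε) (t + ε) := ⟨by linarith [hu.1], by linarith [hv.2]⟩
  have := hioo this
  rw [Set.mem_preimage] at this
  show f (nk k) ∈ U
  rw [← hyx]
  exact this
end
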